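/- Let n be a positive integer, let g₁, g₂, v ∈ F₂[x] have degree less than n with g₁·h₁ = xⁿ−1 and g₂·h₂ = xⁿ−1 for some h₁, h₂ ∈ F₂[x], gcd(g₁, g₂) = 1 and gcd(v−1, xⁿ−1) = 1, and set g₁^⊥ = x^{deg h₁}·h₁(1/x), g₂^⊥ = x^{deg h₂}·h₂(1/x). Then the F₂-linear code { ([c·g₁^⊥ + d·v̄·g₂^⊥ mod xⁿ−1], [c·v̄·g₁^⊥ + d·g₂^⊥ mod xⁿ−1]) : c, d ∈ F₂[x] } ⊆ F₂^{2n} has F₂-dimension deg(g₁) + deg(g₂), where v̄ denotes the polynomial v₀ + v_{n−1}x + v_{n−2}x² + ⋯ + v₁x^{n−1}. -/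

import Mathlib

open Polynomial

/-- The coefficient-vector map `[g] = (g₀, …, g_{n−1}) ∈ F₂ⁿ` (as a linear map). -/
noncomputable def vecL (n : ℕ) : Polynomial (ZMod 2) →ₗ[ZMod 2] (Fin n → ZMod 2) :=
  LinearMap.pi fun i => Polynomial.lcoeff (ZMod 2) (i : ℕ)

/-- The linear map `(a, b) ↦ ([a·v·g₁ + b·g₂ mod xⁿ−1], [a·g₁ + b·v·g₂ mod xⁿ−1])`. -/
noncomputable def cwL (n : ℕ) (g₁ g₂ v : Polynomial (ZMod 2)) :
    (Polynomial (ZMod 2) × Polynomial (ZMod 2)) →ₗ[ZMod 2]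
      ((Fin n → ZMod 2) × (Fin n → ZMod 2)) :=
  LinearMap.prod
    ((vecL n).comp ((Polynomial.modByMonicHom (X ^ n - 1)).comp
      ((LinearMap.mulRight (ZMod 2) (v * g₁)).comp (LinearMap.fst (ZMod 2) _ _) +
       (LinearMap.mulRight (ZMod 2) g₂).comp (LinearMap.snd (ZMod 2) _ _))))
    ((vecL n).comp ((Polynomial.modByMonicHom (X ^ n - 1)).comp
      ((LinearMap.mulRight (ZMod 2) g₁).comp (LinearMap.fst (ZMod 2) _ _) +
       (LinearMap.mulRight (ZMod 2) (v * g₂)).comp (LinearMap.snd (ZMod 2) _ _))))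

/-- The two-generator quasi-cyclic code
`C(g₁,g₂,v) = { ([a·v·g₁ + b·g₂ mod xⁿ−1], [a·g₁ + b·v·g₂ mod xⁿ−1]) : a, b ∈ F₂[x] } ⊆ F₂^{2n}`,
where `F₂^{2n}` is identified with `F₂ⁿ × F₂ⁿ`. -/
noncomputable def QCCode (n : ℕ) (g₁ g₂ v : Polynomial (ZMod 2)) :
    Submodule (ZMod 2) ((Fin n → ZMod 2) × (Fin n → ZMod 2)) :=
  LinearMap.range (cwL n g₁ g₂ v)

/-- Euclidean inner product on `F₂ⁿ`. -/
def einner (n : ℕ) (u w : Fin n → ZMod 2) : ZMod 2 := ∑ i, u i * w i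

/-- Symplectic inner product `⟨u,w⟩ₛ = Σᵢ (uᵢ w_{n+i} − u_{n+i} wᵢ)` on `F₂ⁿ × F₂ⁿ ≅ F₂^{2n}`. -/
def sinner (n : ℕ) (u w : (Fin n → ZMod 2) × (Fin n → ZMod 2)) : ZMod 2 :=
  ∑ i, (u.1 i * w.2 i - u.2 i * w.1 i)

/-- Symplectic dual `C^⊥ₛ = {w : ⟨u,w⟩ₛ = 0 for all u ∈ C}` of a linear code `C ⊆ F₂^{2n}`. -/
noncomputable def sympDual (n : ℕ)
    (C : Submodule (ZMod 2) ((Fin n → ZMod 2) × (Fin n → ZMod 2))) :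
    Submodule (ZMod 2) ((Fin n → ZMod 2) × (Fin n → ZMod 2)) where
  carrier := {w | ∀ u ∈ C, sinner n u w = 0}
  zero_mem' := by intro u _; simp [sinner]
  add_mem' := by
    intro w w' hw hw' u hu
    have h : sinner n u (w + w') = sinner n u w + sinner n u w' := by
      simp only [sinner, Prod.fst_add, Prod.snd_add, Pi.add_apply]
      rw [← Finset.sum_add_distrib]
      exact Finset.sum_congr rfl fun i _ => by ring
    rw [h, hw u hu, hw' u hu, add_zero]
  smul_mem' := by
    intro c w hw u hu
    have h : sinner n u (c • w) = c * sinner n u w := by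
      simp only [sinner, Prod.smul_fst, Prod.smul_snd, Pi.smul_apply, smul_eq_mul,
        Finset.mul_sum]
      exact Finset.sum_congr rfl fun i _ => by ring
    rw [h, hw u hu, mul_zero]

/-- Symplectic weight `wₛ(u) = #{i : (uᵢ, u_{n+i}) ≠ (0,0)}` on `F₂ⁿ × F₂ⁿ ≅ F₂^{2n}`. -/
def sympWt (n : ℕ) (u : (Fin n → ZMod 2) × (Fin n → ZMod 2)) : ℕ :=
  (Finset.univ.filter fun i : Fin n => (u.1 i, u.2 i) ≠ ((0 : ZMod 2), (0 : ZMod 2))).card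

/-- For `f` of degree `< n`, the polynomial `f̄ = f₀ + f_{n−1}x + f_{n−2}x² + ⋯ + f₁x^{n−1}`. -/
noncomputable def barPoly (n : ℕ) (f : Polynomial (ZMod 2)) : Polynomial (ZMod 2) :=
  ∑ i ∈ Finset.range n, Polynomial.C (f.coeff (if i = 0 then 0 else n - i)) * Polynomial.X ^ i

/-- The linear map `(c, d) ↦ ([c·G₁ + d·V·G₂ mod xⁿ−1], [c·V·G₁ + d·G₂ mod xⁿ−1])`;
with `G₁ = g₁^⊥`, `G₂ = g₂^⊥` and `V = v̄` its range is the claimed symplectic dual code. -/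
noncomputable def dualCwL (n : ℕ) (G₁ G₂ V : Polynomial (ZMod 2)) :
    (Polynomial (ZMod 2) × Polynomial (ZMod 2)) →ₗ[ZMod 2]
      ((Fin n → ZMod 2) × (Fin n → ZMod 2)) :=
  LinearMap.prod
    ((vecL n).comp ((Polynomial.modByMonicHom (X ^ n - 1)).comp
      ((LinearMap.mulRight (ZMod 2) G₁).comp (LinearMap.fst (ZMod 2) _ _) +
       (LinearMap.mulRight (ZMod 2) (V * G₂)).comp (LinearMap.snd (ZMod 2) _ _))))
    ((vecL n).comp ((Polynomial.modByMonicHom (X ^ n - 1)).comp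
      ((LinearMap.mulRight (ZMod 2) (V * G₁)).comp (LinearMap.fst (ZMod 2) _ _) +
       (LinearMap.mulRight (ZMod 2) G₂).comp (LinearMap.snd (ZMod 2) _ _))))

/-!
Write `p = xⁿ − 1` and `Kᵢ = gᵢ.reverse`, so that `Kᵢ · gᵢ^⊥ = p`. A codeword depends only on
`c mod K₁` and `d mod K₂`, so the code is the image of the pairs with `deg c < deg g₁` and
`deg d < deg g₂`, and it suffices to show that such a pair with zero image vanishes. If `p` divides
both components, it divides `(v̄² − 1)·c·g₁^⊥` and `(v̄² − 1)·d·g₂^⊥`. In characteristic 2,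
`v̄² − 1 = (v̄ − 1)²`, and `v̄` is the image of `v` under the automorphism `x ↦ x⁻¹ = x^{n−1}` of
`F₂[x]/(p)`, so `v̄ − 1` is a unit modulo `p`. Hence `K₁ g₁^⊥ ∣ c g₁^⊥`, i.e. `K₁ ∣ c`, which forces
`c = 0` by degree; likewise `d = 0`.
-/

theorem pow_sub_one_dvd_pow_sub_pow_of_modEq {R : Type*} [CommRing R] (x : R) {n a b : ℕ}
    (h : a ≡ b [MOD n]) : x ^ n - 1 ∣ x ^ a - x ^ b := by
  simp only [← Ideal.mem_span_singleton, ← Ideal.Quotient.eq, map_pow]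
  refine pow_eq_pow_of_modEq h ?_
  rw [← map_pow, ← map_one (Ideal.Quotient.mk _), Ideal.Quotient.eq, Ideal.mem_span_singleton]

theorem Polynomial.eq_zero_of_mul_dvd_mul_of_degree_lt {R : Type*} [CommRing R] [IsDomain R]
    {K G c : R[X]} (hKG : K * G ≠ 0) (h : K * G ∣ c * G) (hc : c.degree < K.natDegree) :
    c = 0 := by
  refine eq_zero_of_dvd_of_degree_lt ((mul_dvd_mul_iff_right (right_ne_zero_of_mul hKG)).1 h) ?_
  rwa [degree_eq_natDegree (left_ne_zero_of_mul hKG)]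

theorem Polynomial.monic_X_pow_sub_one {R : Type*} [Ring R] {n : ℕ} (hn : n ≠ 0) :
    (X ^ n - 1 : R[X]).Monic := by
  simpa using monic_X_pow_sub_C (1 : R) hn

theorem Polynomial.reverse_X_pow_sub_one {R : Type*} [CommRing R] [Nontrivial R] (n : ℕ) :
    (X ^ n - 1 : R[X]).reverse = 1 - X ^ n := by
  have hXn : (X ^ n : R[X]).reverse = 1 := by
    rw [← mul_one (X ^ n), reverse_X_pow_mul, ← C_1, reverse_C]
  rw [sub_eq_add_neg, ← C_1, ← C_neg, reverse_add_C, hXn, natDegree_X_pow, C_neg, C_1]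
  ring

theorem Polynomial.natDegree_reverse_of_dvd {R : Type*} [CommSemiring R] {g p : R[X]}
    (hg : g ∣ p) (hp : p.coeff 0 ≠ 0) : g.reverse.natDegree = g.natDegree := by
  obtain ⟨h, rfl⟩ := hg
  have hg0 : g.coeff 0 ≠ 0 := fun h0 => hp (by rw [mul_coeff_zero, h0, zero_mul])
  rw [reverse_natDegree, natTrailingDegree_eq_zero.2 (Or.inr hg0), Nat.sub_zero]

theorem dvd_mul_and_dvd_mul_of_isCoprime_sq_sub_one {R : Type*} [CommRing R]
    {p G₁ G₂ V c d : R} (hV : IsCoprime (V ^ 2 - 1) p)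
    (h₁ : p ∣ c * G₁ + d * (V * G₂)) (h₂ : p ∣ c * (V * G₁) + d * G₂) :
    p ∣ c * G₁ ∧ p ∣ d * G₂ := by
  constructor
  · refine hV.symm.dvd_of_dvd_mul_left ?_
    convert dvd_sub (dvd_mul_of_dvd_right h₂ V) h₁ using 1
    ring
  · refine hV.symm.dvd_of_dvd_mul_left ?_
    convert dvd_sub (dvd_mul_of_dvd_right h₁ V) h₂ using 1
    ring

section BarPoly

variable {n : ℕ}

theorem sub_one_mul_modEq_ite {j : ℕ} (hj : j < n) :
    (n - 1) * j ≡ (if j = 0 then 0 else n - j) [MOD n] := by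
  split_ifs with h0
  · simp [h0, Nat.ModEq.refl]
  · rw [Nat.modEq_iff_dvd]
    push_cast [Nat.one_le_iff_ne_zero.2 (by omega : n ≠ 0), hj.le]
    exact ⟨1 - j, by ring⟩

theorem barPoly_eq_sum_range (f : (ZMod 2)[X]) :
    barPoly n f = ∑ j ∈ Finset.range n, C (f.coeff j) * X ^ (if j = 0 then 0 else n - j) := by
  set σ : ℕ → ℕ := fun i => if i = 0 then 0 else n - i
  have hσ : ∀ i ∈ Finset.range n, σ i ∈ Finset.range n ∧ σ (σ i) = i := fun i hi => by
    simp only [σ, Finset.mem_range] at hi ⊢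
    split_ifs <;> omega
  refine Finset.sum_nbij' σ σ (fun i hi => (hσ i hi).1) (fun i hi => (hσ i hi).1)
    (fun i hi => (hσ i hi).2) (fun i hi => (hσ i hi).2) (fun i hi => ?_)
  change _ = C (f.coeff (σ i)) * X ^ σ (σ i)
  rw [(hσ i hi).2]

theorem X_pow_sub_one_dvd_comp_sub_barPoly {f : (ZMod 2)[X]} (hf : f.natDegree < n) :
    X ^ n - 1 ∣ f.comp (X ^ (n - 1)) - barPoly n f := by
  rw [comp, eval₂_eq_sum_range' C hf, barPoly_eq_sum_range, ← Finset.sum_sub_distrib]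
  refine Finset.dvd_sum fun j hj => ?_
  rw [← pow_mul, ← mul_sub]
  exact dvd_mul_of_dvd_right
    (pow_sub_one_dvd_pow_sub_pow_of_modEq X (sub_one_mul_modEq_ite (Finset.mem_range.1 hj))) _

theorem isCoprime_barPoly_sub_one {v : (ZMod 2)[X]} (hv : v.natDegree < n)
    (h : IsCoprime (v - 1) (X ^ n - 1)) : IsCoprime (barPoly n v - 1) (X ^ n - 1) := by
  have hcomp : IsCoprime (v.comp (X ^ (n - 1)) - 1) (X ^ n - 1) := by
    have := h.map (compRingHom (X ^ (n - 1)))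
    simp only [map_sub, map_one, coe_compRingHom_apply, X_pow_comp, ← pow_mul] at this
    refine this.of_isCoprime_of_dvd_right ?_
    simpa using pow_sub_one_dvd_pow_sub_pow_of_modEq (X : (ZMod 2)[X])
      (Nat.modEq_zero_iff_dvd.2 (dvd_mul_left n (n - 1)))
  obtain ⟨k, hk⟩ := X_pow_sub_one_dvd_comp_sub_barPoly hv
  rw [show barPoly n v - 1 = v.comp (X ^ (n - 1)) - 1 + (-k) * (X ^ n - 1) by
    linear_combination -hk]
  exact hcomp.add_mul_right_left _

end BarPoly

section DualCode

variable {n : ℕ} {K₁ K₂ G₁ G₂ V : (ZMod 2)[X]}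

theorem dualCwL_apply (c d : (ZMod 2)[X]) :
    dualCwL n G₁ G₂ V (c, d) =
      (vecL n ((c * G₁ + d * (V * G₂)) %ₘ (X ^ n - 1)),
        vecL n ((c * (V * G₁) + d * G₂) %ₘ (X ^ n - 1))) :=
  rfl

theorem vecL_modByMonic_eq_zero_iff (hn : 0 < n) {q : (ZMod 2)[X]} :
    vecL n (q %ₘ (X ^ n - 1)) = 0 ↔ X ^ n - 1 ∣ q := by
  have hm := monic_X_pow_sub_one (R := ZMod 2) hn.ne'
  rw [← modByMonic_eq_zero_iff_dvd hm]
  refine ⟨fun h => ?_, fun h => by rw [h, map_zero]⟩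
  have hdeg : (q %ₘ (X ^ n - 1)).degree < n := by
    have hXn := degree_X_pow_sub_C hn (1 : ZMod 2)
    rw [C_1] at hXn
    exact hXn ▸ degree_modByMonic_lt q hm
  ext i
  rcases lt_or_ge i n with hi | hi
  · simpa [vecL] using congrFun h ⟨i, hi⟩
  · exact coeff_eq_zero_of_degree_lt (hdeg.trans_le (by exact_mod_cast hi))

theorem dualCwL_mul_eq_zero (hn : 0 < n) (h₁ : K₁ * G₁ = X ^ n - 1) (h₂ : K₂ * G₂ = X ^ n - 1)
    (e f : (ZMod 2)[X]) : dualCwL n G₁ G₂ V (K₁ * e, K₂ * f) = 0 := by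
  rw [dualCwL_apply, Prod.mk_eq_zero, vecL_modByMonic_eq_zero_iff hn,
    vecL_modByMonic_eq_zero_iff hn]
  exact ⟨⟨e + V * f, by linear_combination e * h₁ + V * f * h₂⟩,
    ⟨V * e + f, by linear_combination V * e * h₁ + f * h₂⟩⟩

variable (n K₁ K₂ G₁ G₂ V) in
noncomputable def dualCwLDegreeLT :
    degreeLT (ZMod 2) K₁.natDegree × degreeLT (ZMod 2) K₂.natDegree →ₗ[ZMod 2]
      (Fin n → ZMod 2) × (Fin n → ZMod 2) :=
  dualCwL n G₁ G₂ V ∘ₗ (degreeLT (ZMod 2) K₁.natDegree).subtype.prodMap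
    (degreeLT (ZMod 2) K₂.natDegree).subtype

theorem range_dualCwLDegreeLT (hn : 0 < n) (h₁ : K₁ * G₁ = X ^ n - 1)
    (h₂ : K₂ * G₂ = X ^ n - 1) :
    LinearMap.range (dualCwLDegreeLT n K₁ K₂ G₁ G₂ V) = LinearMap.range (dualCwL n G₁ G₂ V) := by
  refine le_antisymm (LinearMap.range_comp_le_range _ _) ?_
  rintro _ ⟨⟨c, d⟩, rfl⟩
  have hp := (monic_X_pow_sub_one (R := ZMod 2) hn.ne').ne_zero
  have hK₁ : K₁ ≠ 0 := left_ne_zero_of_mul (h₁ ▸ hp)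
  have hK₂ : K₂ ≠ 0 := left_ne_zero_of_mul (h₂ ▸ hp)
  refine ⟨(⟨c % K₁, mem_degreeLT.2 ?_⟩, ⟨d % K₂, mem_degreeLT.2 ?_⟩), ?_⟩
  · exact degree_eq_natDegree hK₁ ▸ degree_mod_lt c hK₁
  · exact degree_eq_natDegree hK₂ ▸ degree_mod_lt d hK₂
  · have hcd : (c, d) = (c % K₁, d % K₂) + (K₁ * (c / K₁), K₂ * (d / K₂)) := by
      simp [EuclideanDomain.mod_add_div]
    rw [hcd, map_add, dualCwL_mul_eq_zero hn h₁ h₂, add_zero]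
    rfl

theorem injective_dualCwLDegreeLT (hn : 0 < n) (h₁ : K₁ * G₁ = X ^ n - 1)
    (h₂ : K₂ * G₂ = X ^ n - 1) (hV : IsCoprime (V ^ 2 - 1) (X ^ n - 1)) :
    Function.Injective (dualCwLDegreeLT n K₁ K₂ G₁ G₂ V) := by
  rw [← LinearMap.ker_eq_bot, LinearMap.ker_eq_bot']
  rintro ⟨⟨c, hc⟩, ⟨d, hd⟩⟩ h0
  rw [dualCwLDegreeLT, LinearMap.comp_apply, LinearMap.prodMap_apply, Submodule.subtype_apply,
    Submodule.subtype_apply, dualCwL_apply, Prod.mk_eq_zero, vecL_modByMonic_eq_zero_iff hn,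
    vecL_modByMonic_eq_zero_iff hn] at h0
  obtain ⟨hc', hd'⟩ := dvd_mul_and_dvd_mul_of_isCoprime_sq_sub_one hV h0.1 h0.2
  have hp := (monic_X_pow_sub_one (R := ZMod 2) hn.ne').ne_zero
  refine Prod.ext (Subtype.ext ?_) (Subtype.ext ?_)
  · exact eq_zero_of_mul_dvd_mul_of_degree_lt (h₁ ▸ hp) (h₁ ▸ hc') (mem_degreeLT.1 hc)
  · exact eq_zero_of_mul_dvd_mul_of_degree_lt (h₂ ▸ hp) (h₂ ▸ hd') (mem_degreeLT.1 hd)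

theorem finrank_range_dualCwL (hn : 0 < n) (h₁ : K₁ * G₁ = X ^ n - 1)
    (h₂ : K₂ * G₂ = X ^ n - 1) (hV : IsCoprime (V ^ 2 - 1) (X ^ n - 1)) :
    Module.finrank (ZMod 2) (LinearMap.range (dualCwL n G₁ G₂ V)) =
      K₁.natDegree + K₂.natDegree := by
  rw [← range_dualCwLDegreeLT hn h₁ h₂,
    LinearMap.finrank_range_of_inj (injective_dualCwLDegreeLT hn h₁ h₂ hV), Module.finrank_prod,
    (degreeLTEquiv _ _).finrank_eq, (degreeLTEquiv _ _).finrank_eq, Module.finrank_fin_fun,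
    Module.finrank_fin_fun]

end DualCode

theorem stmt_6_general (n : ℕ) (g₁ g₂ v h₁ h₂ : Polynomial (ZMod 2))
    (hdegv : v.natDegree < n)
    (he₁ : g₁ * h₁ = X ^ n - 1) (he₂ : g₂ * h₂ = X ^ n - 1)
    (hvcop : IsCoprime (v - 1) (X ^ n - 1)) :
    Module.finrank (ZMod 2)
        ↥(LinearMap.range (dualCwL n h₁.reverse h₂.reverse (barPoly n v))) =
      g₁.natDegree + g₂.natDegree := by
  have hn : 0 < n := Nat.zero_lt_of_lt hdegv
  have hrev : (X ^ n - 1 : (ZMod 2)[X]).reverse = X ^ n - 1 := by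
    rw [reverse_X_pow_sub_one, ← neg_sub, CharTwo.neg_eq]
  have hK₁ : g₁.reverse * h₁.reverse = X ^ n - 1 := by rw [← reverse_mul_of_domain, he₁, hrev]
  have hK₂ : g₂.reverse * h₂.reverse = X ^ n - 1 := by rw [← reverse_mul_of_domain, he₂, hrev]
  have hV : IsCoprime (barPoly n v ^ 2 - 1) (X ^ n - 1) := by
    rw [show barPoly n v ^ 2 - 1 = (barPoly n v - 1) ^ 2 by
      rw [CharTwo.sub_eq_add, CharTwo.sub_eq_add, CharTwo.add_sq, one_pow]]
    exact (isCoprime_barPoly_sub_one hdegv hvcop).pow_left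
  have hcoeff : (X ^ n - 1 : (ZMod 2)[X]).coeff 0 ≠ 0 := by
    simp [coeff_X_pow, hn.ne]
  rw [finrank_range_dualCwL hn hK₁ hK₂ hV, natDegree_reverse_of_dvd ⟨h₁, he₁.symm⟩ hcoeff,
    natDegree_reverse_of_dvd ⟨h₂, he₂.symm⟩ hcoeff]

/-- the code
`{ ([c·g₁^⊥ + d·v̄·g₂^⊥ mod xⁿ−1], [c·v̄·g₁^⊥ + d·g₂^⊥ mod xⁿ−1]) : c, d ∈ F₂[x] }`
has `F₂`-dimension `deg g₁ + deg g₂`, where `g₁^⊥ = h₁.reverse`, `g₂^⊥ = h₂.reverse`. -/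
theorem stmt_6 (n : ℕ) (hn : 0 < n) (g₁ g₂ v h₁ h₂ : Polynomial (ZMod 2))
    (hdeg₁ : g₁.natDegree < n) (hdeg₂ : g₂.natDegree < n) (hdegv : v.natDegree < n)
    (he₁ : g₁ * h₁ = X ^ n - 1) (he₂ : g₂ * h₂ = X ^ n - 1)
    (hcop : IsCoprime g₁ g₂) (hvcop : IsCoprime (v - 1) (X ^ n - 1)) :
    Module.finrank (ZMod 2)
        ↥(LinearMap.range (dualCwL n h₁.reverse h₂.reverse (barPoly n v))) =
      g₁.natDegree + g₂.natDegree :=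
  stmt_6_general n g₁ g₂ v h₁ h₂ hdegv he₁ he₂ hvcop
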